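/- The operators π₈ = (1/7)(Id − J₃) and π₄₈ = (6/7)(Id + (1/6)J₃) on 3-forms are complementary projectors onto the eigenspaces of J₃: π₈ + π₄₈ = Id, π₈ ∘ π₈ = π₈, π₄₈ ∘ π₄₈ = π₄₈, π₈ ∘ π₄₈ = 0, and moreover J₃ ∘ π₈ = −6 π₈ and J₃ ∘ π₄₈ = π₄₈. -/
import Mathlib


namespace Spin7

noncomputable section

/-- Kronecker delta on `Fin 8`. -/
def kron (i j : Fin 8) : ℝ := if i = j then 1 else 0

/-- A 2-form: totally antisymmetric 2-tensor. -/
def Alt2 (β : Fin 8 → Fin 8 → ℝ) : Prop := ∀ i j, β i j = -β j i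

/-- A 3-form: totally antisymmetric 3-tensor. -/
def Alt3 (γ : Fin 8 → Fin 8 → Fin 8 → ℝ) : Prop :=
  ∀ i j k, γ i j k = -γ j i k ∧ γ i j k = -γ i k j

/-- A 4-form: totally antisymmetric 4-tensor. -/
def Alt4 (Φ : Fin 8 → Fin 8 → Fin 8 → Fin 8 → ℝ) : Prop :=
  ∀ i j k l, Φ i j k l = -Φ j i k l ∧ Φ i j k l = -Φ i k j l ∧ Φ i j k l = -Φ i j l k

/-- The Cayley contraction identity for a 4-form `Φ`. -/
def Cayley (Φ : Fin 8 → Fin 8 → Fin 8 → Fin 8 → ℝ) : Prop :=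
  ∀ i j k a b c : Fin 8,
    (∑ p, Φ i j k p * Φ a b c p) =
      kron i a * kron j b * kron k c + kron i b * kron j c * kron k a
        + kron i c * kron j a * kron k b
      - kron i a * kron j c * kron k b - kron i c * kron j b * kron k a
      - kron i b * kron j a * kron k c
      - kron i a * Φ j k b c - kron j a * Φ k i b c - kron k a * Φ i j b c
      - kron i b * Φ j k c a - kron j b * Φ k i c a - kron k b * Φ i j c a
      - kron i c * Φ j k a b - kron j c * Φ k i a b - kron k c * Φ i j a b

/-- The operator J₂ on 2-forms: `J₂(β)_{ij} = ½ Φ_{ijab} β_{ab}`. -/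
def J2 (Φ : Fin 8 → Fin 8 → Fin 8 → Fin 8 → ℝ) (β : Fin 8 → Fin 8 → ℝ) :
    Fin 8 → Fin 8 → ℝ :=
  fun i j => (1/2 : ℝ) * ∑ a, ∑ b, Φ i j a b * β a b

/-- π₇ = ¼(Id − J₂). -/
def pi7 (Φ : Fin 8 → Fin 8 → Fin 8 → Fin 8 → ℝ) (β : Fin 8 → Fin 8 → ℝ) :
    Fin 8 → Fin 8 → ℝ :=
  fun i j => (1/4 : ℝ) * (β i j - J2 Φ β i j)

/-- π₂₁ = ¼(3·Id + J₂). -/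
def pi21 (Φ : Fin 8 → Fin 8 → Fin 8 → Fin 8 → ℝ) (β : Fin 8 → Fin 8 → ℝ) :
    Fin 8 → Fin 8 → ℝ :=
  fun i j => (1/4 : ℝ) * (3 * β i j + J2 Φ β i j)

/-- The operator J₃ on 3-forms. -/
def J3 (Φ : Fin 8 → Fin 8 → Fin 8 → Fin 8 → ℝ) (γ : Fin 8 → Fin 8 → Fin 8 → ℝ) :
    Fin 8 → Fin 8 → Fin 8 → ℝ :=
  fun i j k => (1/2 : ℝ) *
    ∑ p, ∑ q, (Φ i j p q * γ k p q + Φ j k p q * γ i p q + Φ k i p q * γ j p q)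

/-- π₈ = (1/7)(Id − J₃). -/
def pi8 (Φ : Fin 8 → Fin 8 → Fin 8 → Fin 8 → ℝ) (γ : Fin 8 → Fin 8 → Fin 8 → ℝ) :
    Fin 8 → Fin 8 → Fin 8 → ℝ :=
  fun i j k => (1/7 : ℝ) * (γ i j k - J3 Φ γ i j k)

/-- π₄₈ = (6/7)(Id + (1/6)J₃). -/
def pi48 (Φ : Fin 8 → Fin 8 → Fin 8 → Fin 8 → ℝ) (γ : Fin 8 → Fin 8 → Fin 8 → ℝ) :
    Fin 8 → Fin 8 → Fin 8 → ℝ :=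
  fun i j k => (6/7 : ℝ) * (γ i j k + (1/6 : ℝ) * J3 Φ γ i j k)

/-- The operator J₄ on 4-forms. -/
def J4 (Φ σ : Fin 8 → Fin 8 → Fin 8 → Fin 8 → ℝ) :
    Fin 8 → Fin 8 → Fin 8 → Fin 8 → ℝ :=
  fun i j k l => (1/2 : ℝ) * ∑ p, ∑ q,
    (Φ i j p q * σ p q k l + Φ k i p q * σ p q j l + Φ i l p q * σ p q j k
      + Φ k l p q * σ p q i j + Φ j l p q * σ p q k i + Φ j k p q * σ p q i l)

/-- Antisymmetrization with weight 1/4! over four `Fin 8` indices. -/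
def asym4 (g : Fin 8 → Fin 8 → Fin 8 → Fin 8 → ℝ) (i j k l : Fin 8) : ℝ :=
  (1/24 : ℝ) * ∑ τ : Equiv.Perm (Fin 4),
    ((Equiv.Perm.sign τ : ℤ) : ℝ) *
      g (![i, j, k, l] (τ 0)) (![i, j, k, l] (τ 1)) (![i, j, k, l] (τ 2)) (![i, j, k, l] (τ 3))

/-- Simultaneous antisymmetrization (weight 1/4! each) over a lower group of four
indices and an upper group of four indices. -/
def asym44 (F : Fin 8 → Fin 8 → Fin 8 → Fin 8 → Fin 8 → Fin 8 → Fin 8 → Fin 8 → ℝ)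
    (i j k l a b c d : Fin 8) : ℝ :=
  asym4 (fun i' j' k' l' => asym4 (F i' j' k' l') a b c d) i j k l

/-- The projector π₂₇ on 4-forms. -/
def pi27 (Φ σ : Fin 8 → Fin 8 → Fin 8 → Fin 8 → ℝ) :
    Fin 8 → Fin 8 → Fin 8 → Fin 8 → ℝ :=
  fun i j k l => (3/32 : ℝ) *
    (asym4 (fun i' j' k' l' =>
        ∑ a, ∑ b, ∑ c, ∑ d, Φ i' j' a b * Φ k' l' c d * σ a b c d) i j k l
      - 4 * asym4 (fun i' j' k' l' => ∑ a, ∑ b, Φ i' j' a b * σ k' l' a b) i j k l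
      - (1/7 : ℝ) * Φ i j k l * (∑ a, ∑ b, ∑ c, ∑ d, Φ a b c d * σ a b c d)
      + 4 * σ i j k l)

/-- The map `K(H)_{ijkl} = H_{ip}Φ_{pjkl} − H_{jp}Φ_{pikl} + H_{kp}Φ_{pijl} − H_{lp}Φ_{pijk}`. -/
def Kmap (Φ : Fin 8 → Fin 8 → Fin 8 → Fin 8 → ℝ) (H : Fin 8 → Fin 8 → ℝ) :
    Fin 8 → Fin 8 → Fin 8 → Fin 8 → ℝ :=
  fun i j k l => ∑ p,
    (H i p * Φ p j k l - H j p * Φ p i k l + H k p * Φ p i j l - H l p * Φ p i j k)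

/-- The map `K'(σ)_{ij} = ½ Φ_{ipqr} σ_{jpqr} − ½ Φ_{jpqr} σ_{ipqr}`. -/
def Kprime (Φ σ : Fin 8 → Fin 8 → Fin 8 → Fin 8 → ℝ) : Fin 8 → Fin 8 → ℝ :=
  fun i j => (1/2 : ℝ) * ∑ p, ∑ q, ∑ r, (Φ i p q r * σ j p q r - Φ j p q r * σ i p q r)

/-- The totally antisymmetric Levi-Civita symbol on 8 indices with `ε_{12345678} = 1`. -/
def eps8 (v : Fin 8 → Fin 8) : ℝ :=
  Matrix.det (Matrix.of fun r c => if v r = c then (1 : ℝ) else 0)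

/-- Self-duality of the 4-form `Φ`. -/
def SelfDual (Φ : Fin 8 → Fin 8 → Fin 8 → Fin 8 → ℝ) : Prop :=
  ∀ i j k l, (1/24 : ℝ) *
    (∑ a, ∑ b, ∑ c, ∑ d, eps8 ![i, j, k, l, a, b, c, d] * Φ a b c d) = Φ i j k l

/-- Antisymmetrization with weight 1/5! over five `Fin 8` indices. -/
def asym5 (g : Fin 8 → Fin 8 → Fin 8 → Fin 8 → Fin 8 → ℝ) (a i j k l : Fin 8) : ℝ :=
  (1/120 : ℝ) * ∑ τ : Equiv.Perm (Fin 5),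
    ((Equiv.Perm.sign τ : ℤ) : ℝ) *
      g (![a, i, j, k, l] (τ 0)) (![a, i, j, k, l] (τ 1)) (![a, i, j, k, l] (τ 2))
        (![a, i, j, k, l] (τ 3)) (![a, i, j, k, l] (τ 4))


/-! ### Auxiliary machinery -/

section Aux

variable {Φ : Fin 8 → Fin 8 → Fin 8 → Fin 8 → ℝ} {γ : Fin 8 → Fin 8 → Fin 8 → ℝ}

lemma phz12 (hΦ : Alt4 Φ) (a b c : Fin 8) : Φ a a b c = 0 := by have := (hΦ a a b c).1; linarith
lemma phz23 (hΦ : Alt4 Φ) (a b c : Fin 8) : Φ a b b c = 0 := by have := (hΦ a b b c).2.1; linarith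
lemma phz34 (hΦ : Alt4 Φ) (a b c : Fin 8) : Φ a b c c = 0 := by have := (hΦ a b c c).2.2; linarith
lemma phz13 (hΦ : Alt4 Φ) (a b c : Fin 8) : Φ a b a c = 0 := by
  have := (hΦ a b a c).2.1; rw [phz12 hΦ] at this; linarith
lemma phz24 (hΦ : Alt4 Φ) (a b c : Fin 8) : Φ a b c b = 0 := by
  have := (hΦ a b c b).2.2; rw [phz23 hΦ] at this; linarith
lemma phz14 (hΦ : Alt4 Φ) (a b c : Fin 8) : Φ a b c a = 0 := by
  have := (hΦ a b c a).2.2; rw [phz13 hΦ] at this; linarith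
lemma gz12 (hγ : Alt3 γ) (a b : Fin 8) : γ a a b = 0 := by have := (hγ a a b).1; linarith
lemma gz23 (hγ : Alt3 γ) (a b : Fin 8) : γ a b b = 0 := by have := (hγ a b b).2; linarith
lemma gz13 (hγ : Alt3 γ) (a b : Fin 8) : γ a b a = 0 := by
  have h := (hγ a b a).1; rw [gz23 hγ] at h; linarith
lemma gcyc (hγ : Alt3 γ) (a b c : Fin 8) : γ c a b = γ a b c := by
  have h1 := (hγ c a b).1; have h2 := (hγ a c b).2; linarith
lemma phpair (hΦ : Alt4 Φ) (a b c d : Fin 8) : Φ a b c d = Φ c d a b := by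
  have h1 := (hΦ a b c d).2.1
  have h2 := (hΦ a c b d).1
  have h3 := (hΦ c a b d).2.1
  have h4 := (hΦ c b a d).2.2
  have h5 := (hΦ c b d a).2.1
  have h6 := (hΦ c d b a).2.2
  linarith

lemma kron_self (a : Fin 8) : kron a a = 1 := by simp [kron]
lemma kron_comm (a b : Fin 8) : kron a b = kron b a := by simp [kron, eq_comm]

lemma c1 {f g : Fin 8 → ℝ} (h : ∀ a, f a = g a) : ∑ a, f a = ∑ a, g a :=
  Finset.sum_congr rfl fun a _ => h a
lemma c2 {f g : Fin 8 → Fin 8 → ℝ} (h : ∀ a b, f a b = g a b) :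
    ∑ a, ∑ b, f a b = ∑ a, ∑ b, g a b :=
  Finset.sum_congr rfl fun a _ => c1 (h a)
lemma c3 {f g : Fin 8 → Fin 8 → Fin 8 → ℝ} (h : ∀ a b c, f a b c = g a b c) :
    ∑ a, ∑ b, ∑ c, f a b c = ∑ a, ∑ b, ∑ c, g a b c :=
  Finset.sum_congr rfl fun a _ => c2 (h a)

lemma sum_comm3 (g : Fin 8 → Fin 8 → Fin 8 → ℝ) :
    ∑ q, ∑ r, ∑ s, g q r s = ∑ r, ∑ s, ∑ q, g q r s := by
  rw [Finset.sum_comm]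
  exact Finset.sum_congr rfl fun r _ => Finset.sum_comm
lemma sum_comm4 (f : Fin 8 → Fin 8 → Fin 8 → Fin 8 → ℝ) :
    ∑ p, ∑ q, ∑ r, ∑ s, f p q r s = ∑ q, ∑ r, ∑ s, ∑ p, f p q r s := by
  calc ∑ p, ∑ q, ∑ r, ∑ s, f p q r s
      = ∑ q, ∑ p, ∑ r, ∑ s, f p q r s := Finset.sum_comm
    _ = ∑ q, ∑ r, ∑ s, ∑ p, f p q r s :=
        Finset.sum_congr rfl fun q _ => sum_comm3 _
lemma sum_comm4' (f : Fin 8 → Fin 8 → Fin 8 → Fin 8 → ℝ) :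
    ∑ p, ∑ q, ∑ r, ∑ s, f p q r s = ∑ r, ∑ s, ∑ p, ∑ q, f p q r s := by
  rw [sum_comm4]
  calc ∑ q, ∑ r, ∑ s, ∑ p, f p q r s
      = ∑ r, ∑ q, ∑ s, ∑ p, f p q r s := Finset.sum_comm
    _ = ∑ r, ∑ s, ∑ q, ∑ p, f p q r s :=
        Finset.sum_congr rfl fun r _ => Finset.sum_comm
    _ = ∑ r, ∑ s, ∑ p, ∑ q, f p q r s :=
        Finset.sum_congr rfl fun r _ => Finset.sum_congr rfl fun s _ => Finset.sum_comm

/-- The basic contraction `C(a,b,c) = Φ_{abqr} γ_{cqr}`. -/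
def Cc (Φ : Fin 8 → Fin 8 → Fin 8 → Fin 8 → ℝ) (γ : Fin 8 → Fin 8 → Fin 8 → ℝ)
    (a b c : Fin 8) : ℝ := ∑ q, ∑ r, Φ a b q r * γ c q r

/-- The vector contraction `V_j = Φ_{jqrs} γ_{qrs}`. -/
def Vv (Φ : Fin 8 → Fin 8 → Fin 8 → Fin 8 → ℝ) (γ : Fin 8 → Fin 8 → Fin 8 → ℝ)
    (j : Fin 8) : ℝ := ∑ q, ∑ r, ∑ s, Φ j q r s * γ q r s

lemma J3Cc (i j k : Fin 8) :
    J3 Φ γ i j k = (1/2) * (Cc Φ γ i j k + Cc Φ γ j k i + Cc Φ γ k i j) := by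
  simp only [J3, Cc, Finset.sum_add_distrib]

set_option maxHeartbeats 1000000 in
lemma dcontr (hΦ : Alt4 Φ) (hC : Cayley Φ) (i j a b : Fin 8) :
    ∑ p, ∑ q, Φ i j p q * Φ a b p q
      = 6 * kron i a * kron j b - 6 * kron i b * kron j a - 4 * Φ i j a b := by
  have step : ∀ p : Fin 8, ∑ q, Φ i j p q * Φ a b p q =
      kron i a * kron j b * kron p p + kron i b * kron j p * kron p a
        + kron i p * kron j a * kron p b
      - kron i a * kron j p * kron p b - kron i p * kron j b * kron p a
      - kron i b * kron j a * kron p p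
      - kron i a * Φ j p b p - kron j a * Φ p i b p - kron p a * Φ i j b p
      - kron i b * Φ j p p a - kron j b * Φ p i p a - kron p b * Φ i j p a
      - kron i p * Φ j p a b - kron j p * Φ p i a b - kron p p * Φ i j a b :=
    fun p => hC i j p a b p
  rw [c1 step]
  have e1 := phz24 hΦ; have e2 := phz23 hΦ; have e3 := phz13 hΦ
  simp only [kron_self, e1, e2, e3, mul_zero, zero_mul, mul_one, one_mul,
    sub_zero, zero_sub, Finset.sum_sub_distrib, Finset.sum_add_distrib]
  have hba : Φ i j b a = -Φ i j a b := (hΦ i j b a).2.2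
  have hji : Φ j i a b = -Φ i j a b := (hΦ j i a b).1
  have e4 := phz14 hΦ; have e5 := phz12 hΦ; have e6 := phz34 hΦ
  simp [kron, Finset.mul_sum, hba, hji, eq_comm, e4, e5, e6]
  split_ifs <;> ring

set_option maxHeartbeats 1000000 in
lemma T1L (hΦ : Alt4 Φ) (hC : Cayley Φ) (hγ : Alt3 γ) (i j k : Fin 8) :
    ∑ q, ∑ r, ∑ s, ∑ p, Φ i j p q * (Φ k p r s * γ q r s)
      = -2 * γ i j k + Cc Φ γ i j k - 2 * Cc Φ γ j k i - 2 * Cc Φ γ k i j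
        + kron i k * Vv Φ γ j - kron j k * Vv Φ γ i := by
  have hpt : ∀ q r s : Fin 8, ∑ p, Φ i j p q * (Φ k p r s * γ q r s)
      = -(kron i k * (kron j r * (kron q s * γ q r s))
        + kron q k * (kron i r * (kron j s * γ q r s))
        + kron q r * (kron i s * (kron j k * γ q r s))
        - kron q r * (kron i k * (kron j s * γ q r s))
        - kron q k * (kron i s * (kron j r * γ q r s))
        - kron q s * (kron i r * (kron j k * γ q r s))
        - kron i k * (Φ j q r s * γ q r s)
        - kron j k * (Φ q i r s * γ q r s)
        - kron q k * (Φ i j r s * γ q r s)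
        - kron i r * (Φ j q s k * γ q r s)
        - kron j r * (Φ q i s k * γ q r s)
        - kron q r * (Φ i j s k * γ q r s)
        - kron i s * (Φ j q k r * γ q r s)
        - kron j s * (Φ q i k r * γ q r s)
        - kron q s * (Φ i j k r * γ q r s)) := by
    intro q r s
    have hb : ∀ p, Φ i j p q * (Φ k p r s * γ q r s)
        = -((Φ i j q p * Φ k r s p) * γ q r s) := by
      intro p
      have h1 : Φ i j p q = -Φ i j q p := (hΦ i j p q).2.2
      have h2 : Φ k p r s = -Φ k r p s := (hΦ k p r s).2.1
      have h3 : Φ k r p s = -Φ k r s p := (hΦ k r p s).2.2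
      rw [h1, h2, h3]; ring
    rw [c1 hb, Finset.sum_neg_distrib, ← Finset.sum_mul, hC i j q k r s]
    ring
  rw [c3 hpt]
  simp only [Finset.sum_neg_distrib, Finset.sum_add_distrib, Finset.sum_sub_distrib]
  have M1 : ∑ q, ∑ r, ∑ s, kron i k * (kron j r * (kron q s * γ q r s)) = 0 := by
    simp [kron, gz13 hγ]
  have M2 : ∑ q, ∑ r, ∑ s, kron q k * (kron i r * (kron j s * γ q r s)) = γ i j k := by
    have : ∑ q, ∑ r, ∑ s, kron q k * (kron i r * (kron j s * γ q r s)) = γ k i j := by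
      simp [kron]
    rw [this]; exact gcyc hγ i j k
  have M3 : ∑ q, ∑ r, ∑ s, kron q r * (kron i s * (kron j k * γ q r s)) = 0 := by
    simp [kron, gz12 hγ]
  have M4 : ∑ q, ∑ r, ∑ s, kron q r * (kron i k * (kron j s * γ q r s)) = 0 := by
    simp [kron, gz12 hγ]
  have M5 : ∑ q, ∑ r, ∑ s, kron q k * (kron i s * (kron j r * γ q r s)) = -γ i j k := by
    have h : ∑ q, ∑ r, ∑ s, kron q k * (kron i s * (kron j r * γ q r s)) = γ k j i := by
      simp [kron]
    rw [h]
    have h1 := gcyc hγ j i k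
    have h2 := (hγ j i k).1
    linarith
  have M6 : ∑ q, ∑ r, ∑ s, kron q s * (kron i r * (kron j k * γ q r s)) = 0 := by
    simp [kron, gz13 hγ]
  have M7 : ∑ q, ∑ r, ∑ s, kron i k * (Φ j q r s * γ q r s) = kron i k * Vv Φ γ j := by
    simp only [Vv, Finset.mul_sum]
  have M8 : ∑ q, ∑ r, ∑ s, kron j k * (Φ q i r s * γ q r s) = -(kron j k * Vv Φ γ i) := by
    have hb : ∀ q r s : Fin 8, kron j k * (Φ q i r s * γ q r s)
        = -(kron j k * (Φ i q r s * γ q r s)) := by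
      intro q r s; rw [(hΦ q i r s).1]; ring
    rw [c3 hb]
    simp only [Finset.sum_neg_distrib, Vv, Finset.mul_sum]
  have M9 : ∑ q, ∑ r, ∑ s, kron q k * (Φ i j r s * γ q r s) = Cc Φ γ i j k := by
    simp [kron, Cc]
  have M10 : ∑ q, ∑ r, ∑ s, kron i r * (Φ j q s k * γ q r s) = -Cc Φ γ j k i := by
    have h0 : ∑ q, ∑ r, ∑ s, kron i r * (Φ j q s k * γ q r s)
        = ∑ q, ∑ s, Φ j q s k * γ q i s := by simp [kron]
    rw [h0]
    have hb : ∀ q s : Fin 8, Φ j q s k * γ q i s = -(Φ j k q s * γ i q s) := by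
      intro q s
      have h1 : Φ j q s k = -Φ j q k s := (hΦ j q s k).2.2
      have h2 : Φ j q k s = -Φ j k q s := (hΦ j q k s).2.1
      have h3 : γ q i s = -γ i q s := (hγ q i s).1
      rw [h1, h2, h3]; ring
    rw [c2 hb]
    simp only [Finset.sum_neg_distrib, Cc]
  have M11 : ∑ q, ∑ r, ∑ s, kron j r * (Φ q i s k * γ q r s) = -Cc Φ γ k i j := by
    have h0 : ∑ q, ∑ r, ∑ s, kron j r * (Φ q i s k * γ q r s)
        = ∑ q, ∑ s, Φ q i s k * γ q j s := by simp [kron]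
    rw [h0]
    have hb : ∀ q s : Fin 8, Φ q i s k * γ q j s = -(Φ k i q s * γ j q s) := by
      intro q s
      have h1 : Φ q i s k = -Φ q i k s := (hΦ q i s k).2.2
      have h2 : Φ q i k s = -Φ q k i s := (hΦ q i k s).2.1
      have h3 : Φ q k i s = -Φ k q i s := (hΦ q k i s).1
      have h4 : Φ k q i s = -Φ k i q s := (hΦ k q i s).2.1
      have h5 : γ q j s = -γ j q s := (hγ q j s).1
      rw [h1, h2, h3, h4, h5]; ring
    rw [c2 hb]
    simp only [Finset.sum_neg_distrib, Cc]
  have M12 : ∑ q, ∑ r, ∑ s, kron q r * (Φ i j s k * γ q r s) = 0 := by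
    simp [kron, gz12 hγ]
  have M13 : ∑ q, ∑ r, ∑ s, kron i s * (Φ j q k r * γ q r s) = -Cc Φ γ j k i := by
    have h0 : ∑ q, ∑ r, ∑ s, kron i s * (Φ j q k r * γ q r s)
        = ∑ q, ∑ r, Φ j q k r * γ q r i := by simp [kron]
    rw [h0]
    have hb : ∀ q r : Fin 8, Φ j q k r * γ q r i = -(Φ j k q r * γ i q r) := by
      intro q r
      have h1 : Φ j q k r = -Φ j k q r := (hΦ j q k r).2.1
      have h2 : γ i q r = γ q r i := gcyc hγ q r i
      rw [h1, ← h2]; ring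
    rw [c2 hb]
    simp only [Finset.sum_neg_distrib, Cc]
  have M14 : ∑ q, ∑ r, ∑ s, kron j s * (Φ q i k r * γ q r s) = -Cc Φ γ k i j := by
    have h0 : ∑ q, ∑ r, ∑ s, kron j s * (Φ q i k r * γ q r s)
        = ∑ q, ∑ r, Φ q i k r * γ q r j := by simp [kron]
    rw [h0]
    have hb : ∀ q r : Fin 8, Φ q i k r * γ q r j = -(Φ k i q r * γ j q r) := by
      intro q r
      have h1 : Φ q i k r = -Φ i q k r := (hΦ q i k r).1
      have h2 : Φ i q k r = -Φ i k q r := (hΦ i q k r).2.1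
      have h3 : Φ i k q r = -Φ k i q r := (hΦ i k q r).1
      have h4 : γ j q r = γ q r j := gcyc hγ q r j
      rw [h1, h2, h3, ← h4]; ring
    rw [c2 hb]
    simp only [Finset.sum_neg_distrib, Cc]
  have M15 : ∑ q, ∑ r, ∑ s, kron q s * (Φ i j k r * γ q r s) = 0 := by
    simp [kron, gz13 hγ]
  rw [M1, M2, M3, M4, M5, M6, M7, M8, M9, M10, M11, M12, M13, M14, M15]
  ring

set_option maxHeartbeats 1000000 in
lemma T2L (hΦ : Alt4 Φ) (hC : Cayley Φ) (hγ : Alt3 γ) (i j k : Fin 8) :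
    ∑ r, ∑ s, ∑ p, ∑ q, Φ i j p q * (Φ p q r s * γ k r s)
      = 12 * γ i j k - 4 * Cc Φ γ i j k := by
  have hpt : ∀ r s : Fin 8, ∑ p, ∑ q, Φ i j p q * (Φ p q r s * γ k r s)
      = 6 * (kron i r * (kron j s * γ k r s))
        - 6 * (kron i s * (kron j r * γ k r s))
        - 4 * (Φ i j r s * γ k r s) := by
    intro r s
    have hb : ∀ p q : Fin 8, Φ i j p q * (Φ p q r s * γ k r s)
        = (Φ i j p q * Φ r s p q) * γ k r s := by
      intro p q; rw [phpair hΦ p q r s]; ring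
    rw [c2 hb]
    have h1 : ∑ p, ∑ q, (Φ i j p q * Φ r s p q) * γ k r s
        = (∑ p, ∑ q, Φ i j p q * Φ r s p q) * γ k r s := by
      rw [Finset.sum_mul]
      exact c1 fun p => by rw [Finset.sum_mul]
    rw [h1, dcontr hΦ hC i j r s]
    ring
  rw [c2 hpt]
  have h1 : γ k i j = γ i j k := gcyc hγ i j k
  have h3 : γ k j i = -γ i j k := by
    have h2 := gcyc hγ j i k
    have h4 := (hγ j i k).1
    linarith
  simp only [Finset.sum_sub_distrib]
  have N1 : ∑ r, ∑ s, 6 * (kron i r * (kron j s * γ k r s)) = 6 * γ i j k := by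
    simp [kron, ← Finset.mul_sum, h1]
  have N2 : ∑ r, ∑ s, 6 * (kron i s * (kron j r * γ k r s)) = -(6 * γ i j k) := by
    simp [kron, ← Finset.mul_sum, h3]
  have N3 : ∑ r, ∑ s, 4 * (Φ i j r s * γ k r s) = 4 * Cc Φ γ i j k := by
    simp [Cc, ← Finset.mul_sum]
  rw [N1, N2, N3]
  ring

lemma pullhalf (f g h : Fin 8 → Fin 8 → ℝ) :
    ∑ p, ∑ q, ((1/2 : ℝ) * (f p q + (g p q + h p q)))
      = (1/2 : ℝ) * ((∑ p, ∑ q, f p q) + ((∑ p, ∑ q, g p q) + (∑ p, ∑ q, h p q))) := by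
  simp only [mul_add, Finset.sum_add_distrib, Finset.mul_sum]

set_option maxHeartbeats 1000000 in
lemma cayA (hΦ : Alt4 Φ) (hC : Cayley Φ) (hγ : Alt3 γ) (i j k : Fin 8) :
    ∑ p, ∑ q, Φ i j p q * J3 Φ γ k p q
      = 4 * γ i j k - Cc Φ γ i j k - 2 * Cc Φ γ j k i - 2 * Cc Φ γ k i j
        + kron i k * Vv Φ γ j - kron j k * Vv Φ γ i := by
  have hpt : ∀ p q : Fin 8, Φ i j p q * J3 Φ γ k p q
      = (1/2) * ((∑ r, ∑ s, Φ i j p q * (Φ k p r s * γ q r s))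
        + ((∑ r, ∑ s, Φ i j p q * (Φ p q r s * γ k r s))
        + (∑ r, ∑ s, Φ i j p q * (Φ q k r s * γ p r s)))) := by
    intro p q
    have e0 : Φ i j p q * J3 Φ γ k p q
        = (1/2 : ℝ) * (Φ i j p q * ∑ r, ∑ s,
            (Φ k p r s * γ q r s + Φ p q r s * γ k r s + Φ q k r s * γ p r s)) := by
      show Φ i j p q * ((1/2 : ℝ) * ∑ r, ∑ s,
          (Φ k p r s * γ q r s + Φ p q r s * γ k r s + Φ q k r s * γ p r s)) = _
      ring
    rw [e0, Finset.mul_sum]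
    have e1 : ∀ r : Fin 8, Φ i j p q * (∑ s,
        (Φ k p r s * γ q r s + Φ p q r s * γ k r s + Φ q k r s * γ p r s))
        = ∑ s, (Φ i j p q * (Φ k p r s * γ q r s)
            + (Φ i j p q * (Φ p q r s * γ k r s) + Φ i j p q * (Φ q k r s * γ p r s))) := by
      intro r
      rw [Finset.mul_sum]
      exact c1 fun s => by ring
    rw [c1 e1]
    simp only [Finset.sum_add_distrib]
  rw [c2 hpt]
  rw [pullhalf]
  have hA : ∑ p, ∑ q, ∑ r, ∑ s, Φ i j p q * (Φ k p r s * γ q r s)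
      = -2 * γ i j k + Cc Φ γ i j k - 2 * Cc Φ γ j k i - 2 * Cc Φ γ k i j
        + kron i k * Vv Φ γ j - kron j k * Vv Φ γ i := by
    rw [sum_comm4]; exact T1L hΦ hC hγ i j k
  have hB : ∑ p, ∑ q, ∑ r, ∑ s, Φ i j p q * (Φ p q r s * γ k r s)
      = 12 * γ i j k - 4 * Cc Φ γ i j k := by
    rw [sum_comm4']; exact T2L hΦ hC hγ i j k
  have hCC : ∑ p, ∑ q, ∑ r, ∑ s, Φ i j p q * (Φ q k r s * γ p r s)
      = -2 * γ i j k + Cc Φ γ i j k - 2 * Cc Φ γ j k i - 2 * Cc Φ γ k i j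
        + kron i k * Vv Φ γ j - kron j k * Vv Φ γ i := by
    have hsw : ∑ p, ∑ q, ∑ r, ∑ s, Φ i j p q * (Φ q k r s * γ p r s)
        = ∑ p, ∑ q, ∑ r, ∑ s, Φ i j q p * (Φ p k r s * γ q r s) := Finset.sum_comm
    rw [hsw]
    have hb : ∀ p q r s : Fin 8, Φ i j q p * (Φ p k r s * γ q r s)
        = Φ i j p q * (Φ k p r s * γ q r s) := by
      intro p q r s
      have h1 : Φ i j q p = -Φ i j p q := (hΦ i j q p).2.2
      have h2 : Φ p k r s = -Φ k p r s := (hΦ p k r s).1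
      rw [h1, h2]; ring
    have hc4 : ∑ p, ∑ q, ∑ r, ∑ s, Φ i j q p * (Φ p k r s * γ q r s)
        = ∑ p, ∑ q, ∑ r, ∑ s, Φ i j p q * (Φ k p r s * γ q r s) :=
      Finset.sum_congr rfl fun p _ => Finset.sum_congr rfl fun q _ => c2 (hb p q)
    rw [hc4]; exact hA
  rw [hA, hB, hCC]
  ring

lemma J3J3 (hΦ : Alt4 Φ) (hC : Cayley Φ) (hγ : Alt3 γ) (i j k : Fin 8) :
    J3 Φ (J3 Φ γ) i j k = 6 * γ i j k - 5 * J3 Φ γ i j k := by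
  have outer : J3 Φ (J3 Φ γ) i j k
      = (1/2) * ((∑ p, ∑ q, Φ i j p q * J3 Φ γ k p q)
        + ((∑ p, ∑ q, Φ j k p q * J3 Φ γ i p q)
        + (∑ p, ∑ q, Φ k i p q * J3 Φ γ j p q))) := by
    simp only [J3, Finset.sum_add_distrib]
    ring
  rw [outer, cayA hΦ hC hγ i j k, cayA hΦ hC hγ j k i, cayA hΦ hC hγ k i j,
    J3Cc i j k]
  have g1 : γ j k i = γ i j k := (gcyc hγ j k i).symm
  have g2 : γ k i j = γ i j k := gcyc hγ i j k
  have k1 : kron j i = kron i j := kron_comm j i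
  have k2 : kron k i = kron i k := kron_comm k i
  have k3 : kron k j = kron j k := kron_comm k j
  rw [g1, g2, k1, k2, k3]
  ring

lemma J3lin (a b : ℝ) (γ₁ γ₂ : Fin 8 → Fin 8 → Fin 8 → ℝ) (i j k : Fin 8) :
    J3 Φ (fun x y z => a * γ₁ x y z + b * γ₂ x y z) i j k
      = a * J3 Φ γ₁ i j k + b * J3 Φ γ₂ i j k := by
  simp only [J3]
  have hb : ∀ p q : Fin 8,
      Φ i j p q * (a * γ₁ k p q + b * γ₂ k p q)
        + Φ j k p q * (a * γ₁ i p q + b * γ₂ i p q)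
        + Φ k i p q * (a * γ₁ j p q + b * γ₂ j p q)
      = a * (Φ i j p q * γ₁ k p q + Φ j k p q * γ₁ i p q + Φ k i p q * γ₁ j p q)
        + b * (Φ i j p q * γ₂ k p q + Φ j k p q * γ₂ i p q + Φ k i p q * γ₂ j p q) := by
    intro p q; ring
  rw [c2 hb]
  simp only [Finset.sum_add_distrib, ← Finset.mul_sum]
  ring

end Aux

/-- `π₈ = (1/7)(Id − J₃)` and `π₄₈ = (6/7)(Id + (1/6)J₃)` are complementary
projectors onto the eigenspaces of J₃ on 3-forms. -/
theorem pi8_pi48_projectors (Φ : Fin 8 → Fin 8 → Fin 8 → Fin 8 → ℝ)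
    (hΦ : Alt4 Φ) (hCayley : Cayley Φ) :
    ∀ γ : Fin 8 → Fin 8 → Fin 8 → ℝ, Alt3 γ → ∀ i j k,
      pi8 Φ γ i j k + pi48 Φ γ i j k = γ i j k ∧
      pi8 Φ (pi8 Φ γ) i j k = pi8 Φ γ i j k ∧
      pi48 Φ (pi48 Φ γ) i j k = pi48 Φ γ i j k ∧
      pi8 Φ (pi48 Φ γ) i j k = 0 ∧
      J3 Φ (pi8 Φ γ) i j k = -6 * pi8 Φ γ i j k ∧
      J3 Φ (pi48 Φ γ) i j k = pi48 Φ γ i j k := by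
  intro γ hγ i j k
  have key : ∀ a b c : Fin 8, J3 Φ (J3 Φ γ) a b c = 6 * γ a b c - 5 * J3 Φ γ a b c :=
    fun a b c => J3J3 hΦ hCayley hγ a b c
  have e8 : pi8 Φ γ = fun x y z => (1/7 : ℝ) * γ x y z + (-(1/7) : ℝ) * (J3 Φ γ) x y z := by
    funext x y z
    show (1/7 : ℝ) * (γ x y z - J3 Φ γ x y z) = _
    ring
  have e48 : pi48 Φ γ = fun x y z => (6/7 : ℝ) * γ x y z + (1/7 : ℝ) * (J3 Φ γ) x y z := by
    funext x y z
    show (6/7 : ℝ) * (γ x y z + (1/6 : ℝ) * J3 Φ γ x y z) = _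
    ring
  have h8 : ∀ a b c : Fin 8, J3 Φ (pi8 Φ γ) a b c = -6 * pi8 Φ γ a b c := by
    intro a b c
    have e1 : J3 Φ (pi8 Φ γ) a b c
        = (1/7 : ℝ) * J3 Φ γ a b c + (-(1/7) : ℝ) * J3 Φ (J3 Φ γ) a b c := by
      rw [e8]; exact J3lin _ _ _ _ a b c
    rw [e1, key a b c]
    show _ = -6 * ((1/7 : ℝ) * (γ a b c - J3 Φ γ a b c))
    ring
  have h48 : ∀ a b c : Fin 8, J3 Φ (pi48 Φ γ) a b c = pi48 Φ γ a b c := by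
    intro a b c
    have e1 : J3 Φ (pi48 Φ γ) a b c
        = (6/7 : ℝ) * J3 Φ γ a b c + (1/7 : ℝ) * J3 Φ (J3 Φ γ) a b c := by
      rw [e48]; exact J3lin _ _ _ _ a b c
    rw [e1, key a b c]
    show _ = (6/7 : ℝ) * (γ a b c + (1/6 : ℝ) * J3 Φ γ a b c)
    ring
  refine ⟨?_, ?_, ?_, ?_, h8 i j k, h48 i j k⟩
  · show (1/7 : ℝ) * (γ i j k - J3 Φ γ i j k)
        + (6/7 : ℝ) * (γ i j k + (1/6 : ℝ) * J3 Φ γ i j k) = γ i j k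
    ring
  · show (1/7 : ℝ) * (pi8 Φ γ i j k - J3 Φ (pi8 Φ γ) i j k) = pi8 Φ γ i j k
    rw [h8 i j k]; ring
  · show (6/7 : ℝ) * (pi48 Φ γ i j k + (1/6 : ℝ) * J3 Φ (pi48 Φ γ) i j k) = pi48 Φ γ i j k
    rw [h48 i j k]; ring
  · show (1/7 : ℝ) * (pi48 Φ γ i j k - J3 Φ (pi48 Φ γ) i j k) = 0
    rw [h48 i j k]; ring
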